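/- arXiv:math/0305237 — 3 statements merged into one kernel-verified Lean document; each statement's English description precedes it below -/
import Mathlib

section
/- Let n > 1, let U ⊂ ℝⁿ be a nonempty open O(n)-invariant set, I = {|x|² : x ∈ U}, and let θ : I → (0,∞) be of class C². Set ρ(x+iy) = |y|² − θ(|x|²) and Σ = {x+iy : x ∈ U, |y|² = θ(|x|²)}. Then L_ρ(p;v) < 0 for every p ∈ Σ and every nonzero v ∈ T_p^ℂΣ (i.e. the domain D₊ = {x+iy : x ∈ U, |y|² > θ(|x|²)} is strongly pseudoconvex along Σ) if and only if for every s ∈ I one has θ'(s) > 1 and 2 s θ(s) θ''(s) > (1 − θ'(s)) (s θ'(s)² + θ(s)). -/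
open Complex Set

/-- The Levi form of a `C²` function `ρ` at `p` in direction `v`:
`4 L_ρ(p;v) = H_p(v,v) + H_p(iv,iv)` where `H_p` is the second real Fréchet derivative. -/
noncomputable def leviForm {E : Type*} [NormedAddCommGroup E] [NormedSpace ℂ E]
    (ρ : E → ℝ) (p v : E) : ℝ :=
  (iteratedFDeriv ℝ 2 ρ p ![v, v]
    + iteratedFDeriv ℝ 2 ρ p ![Complex.I • v, Complex.I • v]) / 4

/-- The complex tangent space `T_p^ℂΣ = {v : dρ_p(v) = 0 and dρ_p(iv) = 0}`. -/
def complexTangent {E : Type*} [NormedAddCommGroup E] [NormedSpace ℂ E]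
    (ρ : E → ℝ) (p : E) : Set E :=
  {v | fderiv ℝ ρ p v = 0 ∧ fderiv ℝ ρ p (Complex.I • v) = 0}

/-- `ρ(x+iy) = |y|² - θ(|x|²)`. -/
noncomputable def rho (n : ℕ) (θ : ℝ → ℝ) : (Fin n → ℂ) → ℝ :=
  fun z => (∑ j, (z j).im ^ 2) - θ (∑ j, (z j).re ^ 2)

/-- The hypersurface `Σ = {x+iy : x ∈ U, |y|² = θ(|x|²)}`. -/
def SigmaSet (n : ℕ) (U : Set (Fin n → ℝ)) (θ : ℝ → ℝ) : Set (Fin n → ℂ) :=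
  {z | (fun j => (z j).re) ∈ U ∧ (∑ j, (z j).im ^ 2) = θ (∑ j, (z j).re ^ 2)}


/-!
Write `z = x + i y` and `v = a + i b`, and put `s = |x|²`, `k = θ'(s)`, `k' = θ''(s)`. A direct
computation gives `2 L_ρ(p; v) = (1 - k)(|a|² + |b|²) - 2k'(⟨x,a⟩² + ⟨x,b⟩²)`, and `v` is complex
tangent iff `⟨y,b⟩ = k⟨x,a⟩` and `⟨y,a⟩ = -k⟨x,b⟩`. On such `v`, Cauchy–Schwarz applied to
`⟨x,a⟩ a + ⟨x,b⟩ b` against `x` and to `⟨x,a⟩ b - ⟨x,b⟩ a` against `y` yields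
`(k² s + θ(s)) (⟨x,a⟩² + ⟨x,b⟩²) ≤ s θ(s) (|a|² + |b|²)`, from which the two inequalities give
negativity.
Conversely, `a ⟂ x, y`, `b = 0` forces `k > 1`, and the equality case `a = x`, `b ∥ y ⟂ x` of the
bound forces the second inequality; both choices need `n ≥ 2`.
-/

open Module Filter Topology
open scoped RealInnerProductSpace

section InnerProduct

variable {F : Type*} [NormedAddCommGroup F] [InnerProductSpace ℝ F]

lemma exists_norm_eq_one_inner_eq_zero [FiniteDimensional ℝ F] (hF : 2 ≤ finrank ℝ F) (x : F) :
    ∃ e : F, ‖e‖ = 1 ∧ ⟪x, e⟫ = 0 := by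
  have hK : (ℝ ∙ x)ᗮ ≠ ⊥ := by
    intro h
    have hsum := Submodule.finrank_add_finrank_orthogonal (ℝ ∙ x)
    have hle : finrank ℝ (ℝ ∙ x) ≤ 1 := by
      simpa using finrank_span_le_card (R := ℝ) ({x} : Set F)
    rw [h, finrank_bot] at hsum
    omega
  obtain ⟨w, hw, hw0⟩ := Submodule.exists_mem_ne_zero_of_ne_bot hK
  refine ⟨‖w‖⁻¹ • w, norm_smul_inv_norm hw0, ?_⟩
  rw [inner_smul_right, Submodule.mem_orthogonal_singleton_iff_inner_right.mp hw, mul_zero]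

lemma sq_inner_add_sq_inner_mul_le (x y a b : F) {k : ℝ}
    (hb : ⟪y, b⟫ = k * ⟪x, a⟫) (ha : ⟪y, a⟫ = -(k * ⟪x, b⟫)) :
    (k ^ 2 * ‖x‖ ^ 2 + ‖y‖ ^ 2) * (⟪x, a⟫ ^ 2 + ⟪x, b⟫ ^ 2)
      ≤ ‖x‖ ^ 2 * ‖y‖ ^ 2 * (‖a‖ ^ 2 + ‖b‖ ^ 2) := by
  set X := ⟪x, a⟫
  set Y := ⟪x, b⟫
  have hu : ⟪x, X • a + Y • b⟫ = X ^ 2 + Y ^ 2 := by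
    simp only [inner_add_right, inner_smul_right]; ring
  have hw : ⟪y, X • b - Y • a⟫ = k * (X ^ 2 + Y ^ 2) := by
    simp only [inner_sub_right, inner_smul_right, ha, hb]; ring
  have hnorm : ‖X • a + Y • b‖ ^ 2 + ‖X • b - Y • a‖ ^ 2 = (X ^ 2 + Y ^ 2) * (‖a‖ ^ 2 + ‖b‖ ^ 2) := by
    simp only [norm_add_sq_real, norm_sub_sq_real, norm_smul, inner_smul_left, inner_smul_right,
      real_inner_comm a b, Real.norm_eq_abs, mul_pow, sq_abs, conj_trivial]
    ring
  have hCSx := real_inner_mul_inner_self_le x (X • a + Y • b)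
  have hCSy := real_inner_mul_inner_self_le y (X • b - Y • a)
  rw [hu, real_inner_self_eq_norm_sq, real_inner_self_eq_norm_sq] at hCSx
  rw [hw, real_inner_self_eq_norm_sq, real_inner_self_eq_norm_sq] at hCSy
  rcases (add_nonneg (sq_nonneg X) (sq_nonneg Y)).eq_or_lt with hr | hr
  · rw [← hr, mul_zero]; positivity
  · refine le_of_mul_le_mul_left ?_ hr
    nlinarith [mul_le_mul_of_nonneg_left hCSx (sq_nonneg ‖y‖),
      mul_le_mul_of_nonneg_left hCSy (sq_nonneg ‖x‖), congrArg (‖x‖ ^ 2 * ‖y‖ ^ 2 * ·) hnorm]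

def reducedLevi (x a b : F) (k k' : ℝ) : ℝ :=
  (1 - k) * (‖a‖ ^ 2 + ‖b‖ ^ 2) - 2 * k' * (⟪x, a⟫ ^ 2 + ⟪x, b⟫ ^ 2)

lemma reducedLevi_neg {x y a b : F} {k k' : ℝ}
    (hb : ⟪y, b⟫ = k * ⟪x, a⟫) (ha : ⟪y, a⟫ = -(k * ⟪x, b⟫)) (hab : (a, b) ≠ 0) (hk : 1 < k)
    (hk' : (1 - k) * (‖x‖ ^ 2 * k ^ 2 + ‖y‖ ^ 2) < 2 * ‖x‖ ^ 2 * ‖y‖ ^ 2 * k') :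
    reducedLevi x a b k k' < 0 := by
  have hN : 0 < ‖a‖ ^ 2 + ‖b‖ ^ 2 := by
    rw [Ne, Prod.ext_iff, not_and_or] at hab
    rcases hab with h | h
    · have := norm_pos_iff.2 h; positivity
    · have := norm_pos_iff.2 h; positivity
  have hbound := sq_inner_add_sq_inner_mul_le x y a b hb ha
  unfold reducedLevi
  rcases le_or_gt 0 k' with hk'0 | hk'0
  · nlinarith [mul_nonneg hk'0 (add_nonneg (sq_nonneg ⟪x, a⟫) (sq_nonneg ⟪x, b⟫))]
  · -- For `k' < 0`, `hbound` bounds the `k'` term from below.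
    have hm : 0 < k ^ 2 * ‖x‖ ^ 2 + ‖y‖ ^ 2 := by
      by_contra! h
      nlinarith [mul_nonneg (sq_nonneg ‖x‖) (sq_nonneg ‖y‖), sq_nonneg k]
    refine neg_of_mul_neg_left ?_ hm.le
    nlinarith [mul_le_mul_of_nonneg_left hbound (by linarith : (0 : ℝ) ≤ -2 * k'),
      mul_lt_mul_of_pos_left hk' hN]

lemma criterion_of_forall_reducedLevi_neg [FiniteDimensional ℝ F] (hF : 2 ≤ finrank ℝ F) (x : F)
    {T k k' : ℝ} (hT : 0 < T)
    (hL : ∀ y a b : F, ‖y‖ ^ 2 = T → ⟪y, b⟫ = k * ⟪x, a⟫ → ⟪y, a⟫ = -(k * ⟪x, b⟫) →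
      (a, b) ≠ 0 → reducedLevi x a b k k' < 0) :
    1 < k ∧ (1 - k) * (‖x‖ ^ 2 * k ^ 2 + T) < 2 * ‖x‖ ^ 2 * T * k' := by
  obtain ⟨e, he, hxe⟩ := exists_norm_eq_one_inner_eq_zero hF x
  obtain ⟨f, hf, hef⟩ := exists_norm_eq_one_inner_eq_zero hF e
  have hnormT : ∀ u : F, ‖u‖ = 1 → ‖√T • u‖ ^ 2 = T := fun u hu => by
    rw [norm_smul, hu, mul_one, Real.norm_eq_abs, sq_abs, Real.sq_sqrt hT.le]
  have hk : 1 < k := by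
    have := hL (√T • f) e 0 (hnormT f hf) (by simp [hxe]) (by simp [inner_smul_left, real_inner_comm, hef])
      (by simp [← norm_ne_zero_iff, he])
    simp only [reducedLevi, he, hxe, norm_zero, inner_zero_right] at this
    linarith
  refine ⟨hk, ?_⟩
  rcases eq_or_ne x 0 with rfl | hx
  · simp only [norm_zero]; nlinarith
  -- The Cauchy–Schwarz bound is sharp for `a = x` and `b ∥ y ⟂ x`.
  have hs : 0 < ‖x‖ ^ 2 := by positivity
  set c := k * ‖x‖ ^ 2 / T
  have hxy : ⟪x, √T • e⟫ = 0 := by rw [inner_smul_right, hxe, mul_zero]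
  have hcT : c * T = k * ‖x‖ ^ 2 := div_mul_cancel₀ _ hT.ne'
  clear_value c
  have hL' := hL (√T • e) x (c • √T • e) (hnormT e he)
    (by rw [inner_smul_right, real_inner_self_eq_norm_sq, hnormT e he, real_inner_self_eq_norm_sq, hcT])
    (by rw [real_inner_comm, hxy, inner_smul_right, hxy]; ring)
    (by simp [hx])
  have hb : ‖c • √T • e‖ ^ 2 = c ^ 2 * T := by rw [norm_smul, mul_pow, hnormT e he, Real.norm_eq_abs, sq_abs]
  rw [reducedLevi, hb, inner_smul_right, hxy, real_inner_self_eq_norm_sq] at hL'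
  have hscaled : ‖x‖ ^ 2 * ((1 - k) * (‖x‖ ^ 2 * k ^ 2 + T) - 2 * ‖x‖ ^ 2 * T * k') < 0 := by
    have h := mul_neg_of_neg_of_pos hL' hT
    linear_combination h - (1 - k) * (c * T + k * ‖x‖ ^ 2) * hcT
  nlinarith

end InnerProduct

section Derivatives

variable {E F : Type*} [NormedAddCommGroup E] [NormedSpace ℝ E]
  [NormedAddCommGroup F] [InnerProductSpace ℝ F]

noncomputable def innerPullback (R : E →L[ℝ] F) : E →L[ℝ] E →L[ℝ] ℝ := (innerSL ℝ).bilinearComp R R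

@[simp] lemma innerPullback_apply (R : E →L[ℝ] F) (v w : E) : innerPullback R v w = ⟪R v, R w⟫ :=
  rfl

variable (A R : E →L[ℝ] F) {θ : ℝ → ℝ}

lemma hasFDerivAt_normSq_sub_comp_normSq {z : E} (hθ : DifferentiableAt ℝ θ (‖R z‖ ^ 2)) :
    HasFDerivAt (fun z => ‖A z‖ ^ 2 - θ (‖R z‖ ^ 2))
      (2 • innerPullback A z - (2 * deriv θ (‖R z‖ ^ 2)) • innerPullback R z) z := by
  refine (A.hasFDerivAt.norm_sq.fun_sub
    (hθ.hasDerivAt.comp_hasFDerivAt z R.hasFDerivAt.norm_sq)).congr_fderiv ?_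
  ext w
  simp only [sub_apply, smul_apply, ContinuousLinearMap.comp_apply, coe_innerSL_apply,
    nsmul_eq_mul, Nat.cast_ofNat, smul_eq_mul, innerPullback_apply, sub_right_inj]
  ring

lemma iteratedFDeriv_two_normSq_sub_comp_normSq {V : Set ℝ} (hV : IsOpen V)
    (hθ : ContDiffOn ℝ 2 θ V) {p : E} (hp : ‖R p‖ ^ 2 ∈ V) (v w : E) :
    iteratedFDeriv ℝ 2 (fun z => ‖A z‖ ^ 2 - θ (‖R z‖ ^ 2)) p ![v, w] =
      2 * ⟪A v, A w⟫ - 2 * deriv θ (‖R p‖ ^ 2) * ⟪R v, R w⟫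
        - 4 * deriv (deriv θ) (‖R p‖ ^ 2) * (⟪R p, R v⟫ * ⟪R p, R w⟫) := by
  have hnear : ∀ᶠ z in 𝓝 p, ‖R z‖ ^ 2 ∈ V :=
    (R.continuous.norm.pow 2).continuousAt.preimage_mem_nhds (hV.mem_nhds hp)
  have hfderiv : fderiv ℝ (fun z => ‖A z‖ ^ 2 - θ (‖R z‖ ^ 2)) =ᶠ[𝓝 p]
      fun z => 2 • innerPullback A z - (2 * deriv θ (‖R z‖ ^ 2)) • innerPullback R z := by
    filter_upwards [hnear] with z hz
    exact (hasFDerivAt_normSq_sub_comp_normSq A R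
      ((hθ.differentiableOn two_ne_zero).differentiableAt (hV.mem_nhds hz))).fderiv
  have hθ' : HasDerivAt (deriv θ) (deriv (deriv θ) (‖R p‖ ^ 2)) (‖R p‖ ^ 2) :=
    (((hθ.deriv_of_isOpen hV (m := 1) (by norm_num)).differentiableOn one_ne_zero).differentiableAt
      (hV.mem_nhds hp)).hasDerivAt
  have hcoeff : HasFDerivAt (fun z => 2 * deriv θ (‖R z‖ ^ 2)) _ p :=
    ((hθ'.comp_hasFDerivAt p R.hasFDerivAt.norm_sq).const_mul 2 :)
  have hD := ((innerPullback A).hasFDerivAt.fun_const_smul 2).fun_sub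
    (hcoeff.fun_smul (innerPullback R).hasFDerivAt)
  rw [iteratedFDeriv_two_apply, hfderiv.fderiv_eq, hD.fderiv]
  simp only [Matrix.cons_val_zero, Matrix.cons_val_one, Matrix.cons_val_fin_one, sub_apply,
    smul_apply, add_apply, ContinuousLinearMap.smulRight_apply, ContinuousLinearMap.comp_apply,
    coe_innerSL_apply, nsmul_eq_mul, Nat.cast_ofNat, smul_eq_mul, innerPullback_apply]
  ring

end Derivatives

section LeviForm

variable {E F : Type*} [NormedAddCommGroup E] [NormedSpace ℂ E]
  [NormedAddCommGroup F] [InnerProductSpace ℝ F] {R A : E →L[ℝ] F} {θ : ℝ → ℝ}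

lemma mem_complexTangent_normSq_sub_iff (hR : ∀ v, R (I • v) = -A v) (hA : ∀ v, A (I • v) = R v)
    {p v : E} (hθ : DifferentiableAt ℝ θ (‖R p‖ ^ 2)) :
    v ∈ complexTangent (fun z => ‖A z‖ ^ 2 - θ (‖R z‖ ^ 2)) p ↔
      ⟪A p, A v⟫ = deriv θ (‖R p‖ ^ 2) * ⟪R p, R v⟫ ∧
        ⟪A p, R v⟫ = -(deriv θ (‖R p‖ ^ 2) * ⟪R p, A v⟫) := by
  simp only [complexTangent, mem_ofPred_eq, (hasFDerivAt_normSq_sub_comp_normSq A R hθ).fderiv,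
    sub_apply, smul_apply, innerPullback_apply, hR, hA, inner_neg_right, smul_eq_mul,
    nsmul_eq_mul, Nat.cast_ofNat]
  constructor <;> rintro ⟨h₁, h₂⟩ <;> constructor <;> linarith

lemma leviForm_normSq_sub (hR : ∀ v, R (I • v) = -A v) (hA : ∀ v, A (I • v) = R v)
    {V : Set ℝ} (hV : IsOpen V) (hθ : ContDiffOn ℝ 2 θ V) {p : E} (hp : ‖R p‖ ^ 2 ∈ V) (v : E) :
    leviForm (fun z => ‖A z‖ ^ 2 - θ (‖R z‖ ^ 2)) p v =
      reducedLevi (R p) (R v) (A v) (deriv θ (‖R p‖ ^ 2)) (deriv (deriv θ) (‖R p‖ ^ 2)) / 2 := by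
  simp only [leviForm, iteratedFDeriv_two_normSq_sub_comp_normSq A R hV hθ hp, hR, hA,
    inner_neg_left, inner_neg_right, real_inner_self_eq_norm_sq, reducedLevi]
  ring

end LeviForm

section CoordinateSpace

variable {n : ℕ} {θ : ℝ → ℝ}

noncomputable def reVec : (Fin n → ℂ) →L[ℝ] EuclideanSpace ℝ (Fin n) :=
  (EuclideanSpace.equiv (Fin n) ℝ).symm.toContinuousLinearMap ∘L
    ContinuousLinearMap.pi fun j => reCLM ∘L ContinuousLinearMap.proj j

noncomputable def imVec : (Fin n → ℂ) →L[ℝ] EuclideanSpace ℝ (Fin n) :=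
  (EuclideanSpace.equiv (Fin n) ℝ).symm.toContinuousLinearMap ∘L
    ContinuousLinearMap.pi fun j => imCLM ∘L ContinuousLinearMap.proj j

@[simp] lemma reVec_apply (z : Fin n → ℂ) (j : Fin n) : reVec z j = (z j).re := rfl

@[simp] lemma imVec_apply (z : Fin n → ℂ) (j : Fin n) : imVec z j = (z j).im := rfl

def ofReIm (x y : EuclideanSpace ℝ (Fin n)) : Fin n → ℂ := fun j => ⟨x j, y j⟩

@[simp] lemma reVec_ofReIm (x y : EuclideanSpace ℝ (Fin n)) : reVec (ofReIm x y) = x := rfl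

@[simp] lemma imVec_ofReIm (x y : EuclideanSpace ℝ (Fin n)) : imVec (ofReIm x y) = y := rfl

lemma reVec_I_smul (v : Fin n → ℂ) : reVec (I • v) = -imVec v := by ext j; simp

lemma imVec_I_smul (v : Fin n → ℂ) : imVec (I • v) = reVec v := by ext j; simp

lemma prod_reVec_imVec_eq_zero_iff {v : Fin n → ℂ} : (reVec v, imVec v) = 0 ↔ v = 0 := by
  simp [funext_iff, Complex.ext_iff, PiLp.ext_iff, forall_and]

lemma norm_sq_reVec (z : Fin n → ℂ) : ‖reVec z‖ ^ 2 = ∑ j, (z j).re ^ 2 := by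
  simp [EuclideanSpace.real_norm_sq_eq]

lemma norm_sq_imVec (z : Fin n → ℂ) : ‖imVec z‖ ^ 2 = ∑ j, (z j).im ^ 2 := by
  simp [EuclideanSpace.real_norm_sq_eq]

lemma rho_eq : rho n θ = fun z => ‖imVec z‖ ^ 2 - θ (‖reVec z‖ ^ 2) := by
  ext z
  simp only [rho, norm_sq_reVec, norm_sq_imVec]

lemma mem_SigmaSet_iff {U : Set (Fin n → ℝ)} {p : Fin n → ℂ} :
    p ∈ SigmaSet n U θ ↔ (reVec p : Fin n → ℝ) ∈ U ∧ ‖imVec p‖ ^ 2 = θ (‖reVec p‖ ^ 2) := by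
  rw [norm_sq_reVec, norm_sq_imVec]; rfl

lemma mem_complexTangent_rho_iff {p v : Fin n → ℂ} (hθ : DifferentiableAt ℝ θ (‖reVec p‖ ^ 2)) :
    v ∈ complexTangent (rho n θ) p ↔
      ⟪imVec p, imVec v⟫ = deriv θ (‖reVec p‖ ^ 2) * ⟪reVec p, reVec v⟫ ∧
        ⟪imVec p, reVec v⟫ = -(deriv θ (‖reVec p‖ ^ 2) * ⟪reVec p, imVec v⟫) := by
  rw [rho_eq]
  exact mem_complexTangent_normSq_sub_iff reVec_I_smul imVec_I_smul hθ

lemma leviForm_rho {V : Set ℝ} (hV : IsOpen V) (hθ : ContDiffOn ℝ 2 θ V) {p : Fin n → ℂ}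
    (hp : ‖reVec p‖ ^ 2 ∈ V) (v : Fin n → ℂ) :
    leviForm (rho n θ) p v = reducedLevi (reVec p) (reVec v) (imVec v)
      (deriv θ (‖reVec p‖ ^ 2)) (deriv (deriv θ) (‖reVec p‖ ^ 2)) / 2 := by
  rw [rho_eq]
  exact leviForm_normSq_sub reVec_I_smul imVec_I_smul hV hθ hp v

end CoordinateSpace

theorem stmt_1_general {n : ℕ} (hn : 1 < n)
    (U : Set (Fin n → ℝ))
    (θ : ℝ → ℝ) (V : Set ℝ) (hV : IsOpen V)
    (hIV : {s : ℝ | ∃ x ∈ U, s = ∑ j, x j ^ 2} ⊆ V)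
    (hθ : ContDiffOn ℝ 2 θ V)
    (hθpos : ∀ s ∈ {s : ℝ | ∃ x ∈ U, s = ∑ j, x j ^ 2}, 0 < θ s) :
    (∀ p ∈ SigmaSet n U θ, ∀ v ∈ complexTangent (rho n θ) p, v ≠ 0 →
        leviForm (rho n θ) p v < 0)
    ↔ (∀ s ∈ {s : ℝ | ∃ x ∈ U, s = ∑ j, x j ^ 2},
        1 < deriv θ s ∧
        (1 - deriv θ s) * (s * (deriv θ s) ^ 2 + θ s) <
          2 * s * θ s * deriv (deriv θ) s) := by
  have hF : 2 ≤ finrank ℝ (EuclideanSpace ℝ (Fin n)) := by rwa [finrank_euclideanSpace_fin]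
  have hdiff : ∀ s ∈ V, DifferentiableAt ℝ θ s := fun s hs =>
    (hθ.differentiableOn two_ne_zero).differentiableAt (hV.mem_nhds hs)
  constructor
  · rintro hL _ ⟨x, hxU, rfl⟩
    set X : EuclideanSpace ℝ (Fin n) := WithLp.toLp 2 x
    have hX : ‖X‖ ^ 2 ∈ {s : ℝ | ∃ x ∈ U, s = ∑ j, x j ^ 2} :=
      ⟨x, hxU, EuclideanSpace.real_norm_sq_eq X⟩
    rw [← EuclideanSpace.real_norm_sq_eq X]
    refine criterion_of_forall_reducedLevi_neg hF X (hθpos _ hX) fun y a b hy hb ha hab => ?_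
    have hp : ofReIm X y ∈ SigmaSet n U θ := mem_SigmaSet_iff.2 ⟨hxU, by simpa using hy⟩
    have hv : ofReIm a b ∈ complexTangent (rho n θ) (ofReIm X y) :=
      (mem_complexTangent_rho_iff (by simpa using hdiff _ (hIV hX))).2 (by simpa using ⟨hb, ha⟩)
    have hv0 : ofReIm a b ≠ 0 := fun h => hab (by simpa using prod_reVec_imVec_eq_zero_iff.2 h)
    have hL' := hL _ hp _ hv hv0
    rw [leviForm_rho hV hθ (by simpa using hIV hX)] at hL'
    simp only [reVec_ofReIm, imVec_ofReIm] at hL'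
    linarith
  · rintro hcrit p hp v hv hv0
    rw [mem_SigmaSet_iff] at hp
    have hs : ‖reVec p‖ ^ 2 ∈ {s : ℝ | ∃ x ∈ U, s = ∑ j, x j ^ 2} :=
      ⟨_, hp.1, EuclideanSpace.real_norm_sq_eq _⟩
    obtain ⟨hk, hk'⟩ := hcrit _ hs
    rw [← hp.2] at hk'
    rw [mem_complexTangent_rho_iff (hdiff _ (hIV hs))] at hv
    rw [leviForm_rho hV hθ (hIV hs)]
    have := reducedLevi_neg hv.1 hv.2 (mt prod_reVec_imVec_eq_zero_iff.1 hv0) hk hk'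
    linarith

theorem stmt_1 {n : ℕ} (hn : 1 < n)
    (U : Set (Fin n → ℝ)) (hUne : U.Nonempty) (hUopen : IsOpen U)
    (hUinv : ∀ x x' : Fin n → ℝ, x ∈ U → (∑ j, x' j ^ 2) = (∑ j, x j ^ 2) → x' ∈ U)
    (θ : ℝ → ℝ) (V : Set ℝ) (hV : IsOpen V)
    (hIV : {s : ℝ | ∃ x ∈ U, s = ∑ j, x j ^ 2} ⊆ V)
    (hθ : ContDiffOn ℝ 2 θ V)
    (hθpos : ∀ s ∈ {s : ℝ | ∃ x ∈ U, s = ∑ j, x j ^ 2}, 0 < θ s) :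
    (∀ p ∈ SigmaSet n U θ, ∀ v ∈ complexTangent (rho n θ) p, v ≠ 0 →
        leviForm (rho n θ) p v < 0)
    ↔ (∀ s ∈ {s : ℝ | ∃ x ∈ U, s = ∑ j, x j ^ 2},
        1 < deriv θ s ∧
        (1 - deriv θ s) * (s * (deriv θ s) ^ 2 + θ s) <
          2 * s * θ s * deriv (deriv θ) s) :=
  stmt_1_general hn U θ V hV hIV hθ hθpos
end

section
/- Let n > 1, let U ⊂ ℝⁿ be a nonempty open O(n)-invariant set, I = {|x|² : x ∈ U}, and let θ : I → (0,∞) be of class C² satisfying 2 s θ(s) θ''(s) = (1 − θ'(s)) (s θ'(s)² + θ(s)) for all s ∈ I, together with θ'(s) > 1 for all s ∈ I. Set ρ(x+iy) = |y|² − θ(|x|²) and Σ = {x+iy : x ∈ U, |y|² = θ(|x|²)}. Then L_ρ(p;v) ≤ 0 for every p ∈ Σ and every v ∈ T_p^ℂΣ; moreover, L_ρ(p;v) < 0 for every nonzero v ∈ T_p^ℂΣ at every point p = x+iy ∈ Σ with ⟨x,y⟩ ≠ 0, while at every point p = x+iy ∈ Σ with ⟨x,y⟩ = 0 there exists a nonzero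 v ∈ T_p^ℂΣ with L_ρ(p;v) = 0. -/
/-!
Write `p = x + iy`, `v = a + ib`, `r = |x|²` and `θ, θ', θ''` for the values at `r`. Then
`4 L_ρ(p;v) = 2(1 - θ')|v|² - 4θ''(⟨x,a⟩² + ⟨x,b⟩²)`, and `v ∈ T_p^ℂΣ` means
`⟨y,b⟩ = θ'⟨x,a⟩`, `⟨y,a⟩ = -θ'⟨x,b⟩`. Eliminating `θ''` with the ODE and using these two relations,
`rθ · 4L = 2(1 - θ')(rθ|v|² - G(a) - G(b))` with
`G(u) = |y|²⟨x,u⟩² - 2⟨x,y⟩⟨x,u⟩⟨y,u⟩ + |x|²⟨y,u⟩²`. The Gram determinant of `(x, y, u)` is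
nonnegative, i.e. `G(u) ≤ (|x|²|y|² - ⟨x,y⟩²)|u|²`, hence `rθ · 4L ≤ 2(1 - θ')⟨x,y⟩²|v|²`, which is
`≤ 0`, and `< 0` when `⟨x,y⟩ ≠ 0` and `v ≠ 0`. The ODE at `s = 0` would force `(1 - θ')θ = 0`, so
`r > 0`. When `⟨x,y⟩ = 0`, the direction `v = x + i(θ'r/θ)y` is tangent, and the ODE makes
`L_ρ(p;v)` vanish.
-/

open Complex Set

section SumSq

variable {E ι : Type*} [NormedAddCommGroup E] [NormedSpace ℝ E] [Fintype ι]

noncomputable def sumSqFDeriv (ℓ : ι → E →L[ℝ] ℝ) : E →L[ℝ] E →L[ℝ] ℝ :=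
  ∑ j, ((2 : ℝ) • ℓ j).smulRight (ℓ j)

lemma sumSqFDeriv_apply (ℓ : ι → E →L[ℝ] ℝ) (z w : E) :
    sumSqFDeriv ℓ z w = 2 * ∑ j, ℓ j z * ℓ j w := by
  simp [sumSqFDeriv, Finset.mul_sum, mul_assoc]

lemma hasFDerivAt_sum_sq (ℓ : ι → E →L[ℝ] ℝ) (z : E) :
    HasFDerivAt (fun z => ∑ j, ℓ j z ^ 2) (sumSqFDeriv ℓ z) z := by
  simp only [sq]
  refine (HasFDerivAt.fun_sum fun j _ => (ℓ j).hasFDerivAt.mul (ℓ j).hasFDerivAt).congr_fderiv ?_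
  ext w
  simp only [sum_apply, add_apply, smul_apply, smul_eq_mul, sumSqFDeriv_apply, Finset.mul_sum]
  exact Finset.sum_congr rfl fun j _ => by ring

end SumSq

section Gram

variable {E : Type*} [NormedAddCommGroup E] [InnerProductSpace ℝ E]

open Matrix in
lemma det_gram_three_nonneg (x y u : E) :
    ‖y‖ ^ 2 * inner ℝ x u ^ 2 - 2 * inner ℝ x y * inner ℝ x u * inner ℝ y u
        + ‖x‖ ^ 2 * inner ℝ y u ^ 2
      ≤ (‖x‖ ^ 2 * ‖y‖ ^ 2 - inner ℝ x y ^ 2) * ‖u‖ ^ 2 := by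
  have h := (posSemidef_gram ℝ ![x, y, u]).det_nonneg
  rw [det_fin_three] at h
  simp only [gram_apply, cons_val_zero, cons_val_one, cons_val_two, head_cons, tail_cons,
    real_inner_self_eq_norm_sq] at h
  rw [real_inner_comm x y, real_inner_comm x u, real_inner_comm y u] at h
  linear_combination h

lemma norm_sq_mul_norm_sq_mul_levi_le (x y a b : E) {t₁ t₂ : ℝ} (ht₁ : 1 ≤ t₁)
    (hode : 2 * ‖x‖ ^ 2 * ‖y‖ ^ 2 * t₂ = (1 - t₁) * (‖x‖ ^ 2 * t₁ ^ 2 + ‖y‖ ^ 2))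
    (ha : inner ℝ y a = -(t₁ * inner ℝ x b)) (hb : inner ℝ y b = t₁ * inner ℝ x a) :
    ‖x‖ ^ 2 * ‖y‖ ^ 2 *
        (2 * (1 - t₁) * (‖a‖ ^ 2 + ‖b‖ ^ 2) - 4 * t₂ * (inner ℝ x a ^ 2 + inner ℝ x b ^ 2))
      ≤ 2 * (1 - t₁) * inner ℝ x y ^ 2 * (‖a‖ ^ 2 + ‖b‖ ^ 2) := by
  have hgram := add_le_add (det_gram_three_nonneg x y a) (det_gram_three_nonneg x y b)
  rw [ha, hb] at hgram
  nlinarith [mul_le_mul_of_nonpos_left hgram (by linarith : 2 * (1 - t₁) ≤ 0)]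

end Gram

lemma norm_toLp_sq {ι : Type*} [Fintype ι] (f : ι → ℝ) :
    ‖WithLp.toLp 2 f‖ ^ 2 = ∑ j, f j ^ 2 := by
  simp [EuclideanSpace.real_norm_sq_eq]

lemma inner_toLp {ι : Type*} [Fintype ι] (f g : ι → ℝ) :
    inner ℝ (WithLp.toLp 2 f) (WithLp.toLp 2 g) = ∑ j, f j * g j := by
  simp [EuclideanSpace.inner_toLp_toLp, dotProduct, mul_comm]

def SatisfiesODEAt (θ : ℝ → ℝ) (s : ℝ) : Prop :=
  2 * s * θ s * deriv (deriv θ) s = (1 - deriv θ s) * (s * deriv θ s ^ 2 + θ s)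

lemma SatisfiesODEAt.pos {θ : ℝ → ℝ} {s : ℝ} (hode : SatisfiesODEAt θ s) (hs : 0 ≤ s)
    (hθ : 0 < θ s) (ht₁ : 1 < deriv θ s) : 0 < s := by
  refine hs.lt_of_ne ?_
  rintro rfl
  unfold SatisfiesODEAt at hode
  nlinarith

section Rho

variable {n : ℕ} {θ : ℝ → ℝ} {V : Set ℝ}

noncomputable def reCoord (j : Fin n) : (Fin n → ℂ) →L[ℝ] ℝ :=
  reCLM.comp (ContinuousLinearMap.proj j)

noncomputable def imCoord (j : Fin n) : (Fin n → ℂ) →L[ℝ] ℝ :=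
  imCLM.comp (ContinuousLinearMap.proj j)

@[simp] lemma reCoord_apply (j : Fin n) (z : Fin n → ℂ) : reCoord j z = (z j).re := rfl

@[simp] lemma imCoord_apply (j : Fin n) (z : Fin n → ℂ) : imCoord j z = (z j).im := rfl

lemma hasFDerivAt_rho {z : Fin n → ℂ} (hθ : DifferentiableAt ℝ θ (∑ j, (z j).re ^ 2)) :
    HasFDerivAt (rho n θ)
      (sumSqFDeriv imCoord z - deriv θ (∑ j, (z j).re ^ 2) • sumSqFDeriv reCoord z) z :=
  (hasFDerivAt_sum_sq imCoord z).sub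
    (hθ.hasDerivAt.comp_hasFDerivAt z (hasFDerivAt_sum_sq reCoord z))

lemma fderiv_rho_apply {z : Fin n → ℂ} (hθ : DifferentiableAt ℝ θ (∑ j, (z j).re ^ 2))
    (v : Fin n → ℂ) :
    fderiv ℝ (rho n θ) z v = 2 * ∑ j, (z j).im * (v j).im
      - deriv θ (∑ j, (z j).re ^ 2) * (2 * ∑ j, (z j).re * (v j).re) := by
  simp [(hasFDerivAt_rho hθ).fderiv, sumSqFDeriv_apply]

lemma hasFDerivAt_fderiv_rho (hV : IsOpen V) (hθ : ContDiffOn ℝ 2 θ V) {p : Fin n → ℂ}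
    (hp : (∑ j, (p j).re ^ 2) ∈ V) :
    HasFDerivAt (fderiv ℝ (rho n θ))
      (sumSqFDeriv imCoord - (deriv θ (∑ j, (p j).re ^ 2) • sumSqFDeriv reCoord
        + (deriv (deriv θ) (∑ j, (p j).re ^ 2) • sumSqFDeriv reCoord p).smulRight
            (sumSqFDeriv reCoord p))) p := by
  have hq : Continuous fun z : Fin n → ℂ => ∑ j, (z j).re ^ 2 := by fun_prop
  have hfd : fderiv ℝ (rho n θ) =ᶠ[nhds p]
      fun z => sumSqFDeriv imCoord z - deriv θ (∑ j, (z j).re ^ 2) • sumSqFDeriv reCoord z := by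
    filter_upwards [(hV.preimage hq).mem_nhds hp] with z hz
    exact (hasFDerivAt_rho
      ((hθ.contDiffAt (hV.mem_nhds hz)).differentiableAt (by norm_num))).fderiv
  have hθ' : DifferentiableAt ℝ (deriv θ) (∑ j, (p j).re ^ 2) :=
    ((hθ.deriv_of_isOpen (m := 1) hV (by norm_num)).contDiffAt (hV.mem_nhds hp)).differentiableAt
      (by norm_num)
  have hc : HasFDerivAt (fun z : Fin n → ℂ => deriv θ (∑ j, (z j).re ^ 2))
      (deriv (deriv θ) (∑ j, (p j).re ^ 2) • sumSqFDeriv reCoord p) p :=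
    hθ'.hasDerivAt.comp_hasFDerivAt (f := fun z : Fin n → ℂ => ∑ j, (z j).re ^ 2) p
      (hasFDerivAt_sum_sq reCoord p)
  exact ((sumSqFDeriv imCoord).hasFDerivAt.sub
    (hc.fun_smul (sumSqFDeriv reCoord).hasFDerivAt)).congr_of_eventuallyEq hfd

lemma re_I_smul_apply (v : Fin n → ℂ) (j : Fin n) : ((I • v) j).re = -(v j).im := by simp

lemma im_I_smul_apply (v : Fin n → ℂ) (j : Fin n) : ((I • v) j).im = (v j).re := by simp

lemma four_mul_leviForm_rho (hV : IsOpen V) (hθ : ContDiffOn ℝ 2 θ V) {p : Fin n → ℂ}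
    (hp : (∑ j, (p j).re ^ 2) ∈ V) (v : Fin n → ℂ) :
    4 * leviForm (rho n θ) p v =
      2 * (1 - deriv θ (∑ j, (p j).re ^ 2)) * (∑ j, (v j).re ^ 2 + ∑ j, (v j).im ^ 2)
        - 4 * deriv (deriv θ) (∑ j, (p j).re ^ 2)
          * ((∑ j, (p j).re * (v j).re) ^ 2 + (∑ j, (p j).re * (v j).im) ^ 2) := by
  simp only [leviForm, iteratedFDeriv_two_apply, (hasFDerivAt_fderiv_rho hV hθ hp).fderiv,
    Matrix.cons_val_zero, Matrix.cons_val_one, Matrix.cons_val_fin_one, sub_apply,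
    add_apply, smul_apply, ContinuousLinearMap.smulRight_apply, sumSqFDeriv_apply, reCoord_apply,
    imCoord_apply, re_I_smul_apply, im_I_smul_apply, smul_eq_mul, mul_neg, neg_mul, neg_neg,
    Finset.sum_neg_distrib, sq]
  ring

lemma mem_complexTangent_rho {p : Fin n → ℂ} (hθ : DifferentiableAt ℝ θ (∑ j, (p j).re ^ 2))
    (v : Fin n → ℂ) :
    v ∈ complexTangent (rho n θ) p ↔
      ∑ j, (p j).im * (v j).im = deriv θ (∑ j, (p j).re ^ 2) * ∑ j, (p j).re * (v j).re ∧
      ∑ j, (p j).im * (v j).re = -(deriv θ (∑ j, (p j).re ^ 2) * ∑ j, (p j).re * (v j).im) := by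
  simp only [complexTangent, mem_ofPred_eq, fderiv_rho_apply hθ, re_I_smul_apply,
    im_I_smul_apply, mul_neg, Finset.sum_neg_distrib]
  constructor <;> rintro ⟨h₁, h₂⟩ <;> constructor <;> linarith

lemma mul_four_mul_leviForm_rho_le (hV : IsOpen V) (hθ : ContDiffOn ℝ 2 θ V)
    {p : Fin n → ℂ} (hp : (∑ j, (p j).re ^ 2) ∈ V)
    (hy : ∑ j, (p j).im ^ 2 = θ (∑ j, (p j).re ^ 2))
    (ht₁ : 1 ≤ deriv θ (∑ j, (p j).re ^ 2))
    (hode : SatisfiesODEAt θ (∑ j, (p j).re ^ 2))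
    {v : Fin n → ℂ} (hv : v ∈ complexTangent (rho n θ) p) :
    (∑ j, (p j).re ^ 2) * θ (∑ j, (p j).re ^ 2) * (4 * leviForm (rho n θ) p v)
      ≤ 2 * (1 - deriv θ (∑ j, (p j).re ^ 2)) * (∑ j, (p j).re * (p j).im) ^ 2
          * (∑ j, (v j).re ^ 2 + ∑ j, (v j).im ^ 2) := by
  have hθd := (hθ.contDiffAt (hV.mem_nhds hp)).differentiableAt (by norm_num)
  obtain ⟨hb, ha⟩ := (mem_complexTangent_rho hθd v).1 hv
  unfold SatisfiesODEAt at hode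
  rw [← hy] at hode ⊢
  rw [four_mul_leviForm_rho hV hθ hp]
  have := norm_sq_mul_norm_sq_mul_levi_le (WithLp.toLp 2 fun j => (p j).re)
    (WithLp.toLp 2 fun j => (p j).im) (WithLp.toLp 2 fun j => (v j).re)
    (WithLp.toLp 2 fun j => (v j).im) ht₁
    (by simpa only [norm_toLp_sq] using hode) (by simpa only [inner_toLp] using ha)
    (by simpa only [inner_toLp] using hb)
  simpa only [norm_toLp_sq, inner_toLp] using this

lemma leviForm_rho_nonpos (hV : IsOpen V) (hθ : ContDiffOn ℝ 2 θ V)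
    {p : Fin n → ℂ} (hp : (∑ j, (p j).re ^ 2) ∈ V)
    (hy : ∑ j, (p j).im ^ 2 = θ (∑ j, (p j).re ^ 2)) (hθpos : 0 < θ (∑ j, (p j).re ^ 2))
    (ht₁ : 1 < deriv θ (∑ j, (p j).re ^ 2))
    (hode : SatisfiesODEAt θ (∑ j, (p j).re ^ 2))
    {v : Fin n → ℂ} (hv : v ∈ complexTangent (rho n θ) p) :
    leviForm (rho n θ) p v ≤ 0 := by
  have hr₀ := hode.pos (Finset.sum_nonneg fun j _ => sq_nonneg _) hθpos ht₁
  have hle := mul_four_mul_leviForm_rho_le hV hθ hp hy ht₁.le hode hv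
  have hrhs : 2 * (1 - deriv θ (∑ j, (p j).re ^ 2)) * (∑ j, (p j).re * (p j).im) ^ 2
      * (∑ j, (v j).re ^ 2 + ∑ j, (v j).im ^ 2) ≤ 0 :=
    mul_nonpos_of_nonpos_of_nonneg
      (mul_nonpos_of_nonpos_of_nonneg (by linarith) (sq_nonneg _)) (by positivity)
  nlinarith [mul_pos hr₀ hθpos]

lemma sum_re_sq_add_sum_im_sq_pos {v : Fin n → ℂ} (hv : v ≠ 0) :
    0 < ∑ j, (v j).re ^ 2 + ∑ j, (v j).im ^ 2 := by
  obtain ⟨j, hj⟩ := Function.ne_iff.1 hv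
  rw [← Finset.sum_add_distrib]
  refine Finset.sum_pos' (fun j _ => by positivity) ⟨j, Finset.mem_univ j, ?_⟩
  simpa [normSq_apply, sq] using normSq_pos.2 hj

lemma leviForm_rho_neg (hV : IsOpen V) (hθ : ContDiffOn ℝ 2 θ V)
    {p : Fin n → ℂ} (hp : (∑ j, (p j).re ^ 2) ∈ V)
    (hy : ∑ j, (p j).im ^ 2 = θ (∑ j, (p j).re ^ 2)) (hθpos : 0 < θ (∑ j, (p j).re ^ 2))
    (ht₁ : 1 < deriv θ (∑ j, (p j).re ^ 2))
    (hode : SatisfiesODEAt θ (∑ j, (p j).re ^ 2))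
    (hc : ∑ j, (p j).re * (p j).im ≠ 0)
    {v : Fin n → ℂ} (hv : v ∈ complexTangent (rho n θ) p) (hv₀ : v ≠ 0) :
    leviForm (rho n θ) p v < 0 := by
  have hr₀ := hode.pos (Finset.sum_nonneg fun j _ => sq_nonneg _) hθpos ht₁
  have hle := mul_four_mul_leviForm_rho_le hV hθ hp hy ht₁.le hode hv
  have hrhs : 2 * (1 - deriv θ (∑ j, (p j).re ^ 2)) * (∑ j, (p j).re * (p j).im) ^ 2
      * (∑ j, (v j).re ^ 2 + ∑ j, (v j).im ^ 2) < 0 :=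
    mul_neg_of_neg_of_pos (mul_neg_of_neg_of_pos (by linarith) (by positivity))
      (sum_re_sq_add_sum_im_sq_pos hv₀)
  nlinarith [mul_pos hr₀ hθpos]

lemma exists_leviForm_rho_eq_zero (hV : IsOpen V) (hθ : ContDiffOn ℝ 2 θ V)
    {p : Fin n → ℂ} (hp : (∑ j, (p j).re ^ 2) ∈ V)
    (hy : ∑ j, (p j).im ^ 2 = θ (∑ j, (p j).re ^ 2)) (hθpos : 0 < θ (∑ j, (p j).re ^ 2))
    (ht₁ : 1 < deriv θ (∑ j, (p j).re ^ 2))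
    (hode : SatisfiesODEAt θ (∑ j, (p j).re ^ 2))
    (hc : ∑ j, (p j).re * (p j).im = 0) :
    ∃ v ∈ complexTangent (rho n θ) p, v ≠ 0 ∧ leviForm (rho n θ) p v = 0 := by
  set r := ∑ j, (p j).re ^ 2 with hr
  have hr₀ : 0 < r := hode.pos (Finset.sum_nonneg fun j _ => sq_nonneg _) hθpos ht₁
  set μ := deriv θ r * r / θ r with hμ
  let v : Fin n → ℂ := fun j => ⟨(p j).re, μ * (p j).im⟩
  have hθd := (hθ.contDiffAt (hV.mem_nhds hp)).differentiableAt (by norm_num)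
  refine ⟨v, (mem_complexTangent_rho hθd v).2 ?_, ?_, ?_⟩
  · simp only [v, ← hr, mul_left_comm _ μ, ← Finset.mul_sum, ← sq, hy, hc, mul_zero, neg_zero]
    exact ⟨by rw [hμ]; field_simp, by simpa only [mul_comm] using hc⟩
  · intro hv
    have : ∑ j, (v j).re ^ 2 = 0 := by simp [hv]
    exact hr₀.ne' this
  · have h4 := four_mul_leviForm_rho hV hθ hp v
    simp only [v, ← hr, mul_left_comm _ μ, ← Finset.mul_sum, ← sq, hy, hc, mul_pow] at h4
    have : 4 * leviForm (rho n θ) p v = 0 := by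
      rw [h4, hμ]
      unfold SatisfiesODEAt at hode
      have hθr := hθpos.ne'
      field_simp
      linear_combination (-2 * r * θ r) * hode
    linarith

end Rho

theorem stmt_3_general {n : ℕ}
    (U : Set (Fin n → ℝ))
    (θ : ℝ → ℝ) (V : Set ℝ) (hV : IsOpen V)
    (hIV : {s : ℝ | ∃ x ∈ U, s = ∑ j, x j ^ 2} ⊆ V)
    (hθ : ContDiffOn ℝ 2 θ V)
    (hθpos : ∀ s ∈ {s : ℝ | ∃ x ∈ U, s = ∑ j, x j ^ 2}, 0 < θ s)
    (hode : ∀ s ∈ {s : ℝ | ∃ x ∈ U, s = ∑ j, x j ^ 2},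
      2 * s * θ s * deriv (deriv θ) s =
        (1 - deriv θ s) * (s * (deriv θ s) ^ 2 + θ s))
    (hθ' : ∀ s ∈ {s : ℝ | ∃ x ∈ U, s = ∑ j, x j ^ 2}, 1 < deriv θ s) :
    (∀ p ∈ SigmaSet n U θ, ∀ v ∈ complexTangent (rho n θ) p,
        leviForm (rho n θ) p v ≤ 0) ∧
    (∀ p ∈ SigmaSet n U θ, (∑ j, (p j).re * (p j).im) ≠ 0 →
        ∀ v ∈ complexTangent (rho n θ) p, v ≠ 0 → leviForm (rho n θ) p v < 0) ∧
    (∀ p ∈ SigmaSet n U θ, (∑ j, (p j).re * (p j).im) = 0 →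
        ∃ v ∈ complexTangent (rho n θ) p, v ≠ 0 ∧ leviForm (rho n θ) p v = 0) := by
  have hI : ∀ p ∈ SigmaSet n U θ, (∑ j, (p j).re ^ 2) ∈ {s : ℝ | ∃ x ∈ U, s = ∑ j, x j ^ 2} :=
    fun p hp => ⟨_, hp.1, rfl⟩
  refine ⟨fun p hp v hv => ?_, fun p hp hc v hv hv₀ => ?_, fun p hp hc => ?_⟩
  · exact leviForm_rho_nonpos hV hθ (hIV (hI p hp)) hp.2 (hθpos _ (hI p hp))
      (hθ' _ (hI p hp)) (hode _ (hI p hp)) hv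
  · exact leviForm_rho_neg hV hθ (hIV (hI p hp)) hp.2 (hθpos _ (hI p hp))
      (hθ' _ (hI p hp)) (hode _ (hI p hp)) hc hv hv₀
  · exact exists_leviForm_rho_eq_zero hV hθ (hIV (hI p hp)) hp.2 (hθpos _ (hI p hp))
      (hθ' _ (hI p hp)) (hode _ (hI p hp)) hc

theorem stmt_3 {n : ℕ} (hn : 1 < n)
    (U : Set (Fin n → ℝ)) (hUne : U.Nonempty) (hUopen : IsOpen U)
    (hUinv : ∀ x x' : Fin n → ℝ, x ∈ U → (∑ j, x' j ^ 2) = (∑ j, x j ^ 2) → x' ∈ U)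
    (θ : ℝ → ℝ) (V : Set ℝ) (hV : IsOpen V)
    (hIV : {s : ℝ | ∃ x ∈ U, s = ∑ j, x j ^ 2} ⊆ V)
    (hθ : ContDiffOn ℝ 2 θ V)
    (hθpos : ∀ s ∈ {s : ℝ | ∃ x ∈ U, s = ∑ j, x j ^ 2}, 0 < θ s)
    (hode : ∀ s ∈ {s : ℝ | ∃ x ∈ U, s = ∑ j, x j ^ 2},
      2 * s * θ s * deriv (deriv θ) s =
        (1 - deriv θ s) * (s * (deriv θ s) ^ 2 + θ s))
    (hθ' : ∀ s ∈ {s : ℝ | ∃ x ∈ U, s = ∑ j, x j ^ 2}, 1 < deriv θ s) :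
    (∀ p ∈ SigmaSet n U θ, ∀ v ∈ complexTangent (rho n θ) p,
        leviForm (rho n θ) p v ≤ 0) ∧
    (∀ p ∈ SigmaSet n U θ, (∑ j, (p j).re * (p j).im) ≠ 0 →
        ∀ v ∈ complexTangent (rho n θ) p, v ≠ 0 → leviForm (rho n θ) p v < 0) ∧
    (∀ p ∈ SigmaSet n U θ, (∑ j, (p j).re * (p j).im) = 0 →
        ∃ v ∈ complexTangent (rho n θ) p, v ≠ 0 ∧ leviForm (rho n θ) p v = 0) :=
  stmt_3_general U θ V hV hIV hθ hθpos hode hθ'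
end

section
/- Let t > 0, let f be a positive C² function on a neighborhood of t in (0,∞), and define θ on a neighborhood of t² by θ(s) = f(√s)² (so that θ(t²) = f(t)²). Then: (a) θ'(t²) < 1 if and only if f(t) f'(t)/t < 1; and (b) 2 t² θ(t²) θ''(t²) < (1 − θ'(t²)) ( t² θ'(t²)² + θ(t²) ) if and only if f(t) ( f''(t) + f'(t)³/t ) < 1. -/
open Set Filter Topology

/-!
With `θ s = f (√s) ^ 2`, the chain rule gives `θ' s = f(√s) f'(√s) / √s` on a neighbourhood of
`t²`, so (a) is an identity. Differentiating once more,
`θ''(t²) = (f'(t)² + f(t) f''(t)) / (2t²) - f(t) f'(t) / (2t³)`, and substituting into (b) the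
difference of its two sides is exactly `f(t)² (1 - f(t) (f''(t) + f'(t)³ / t))`.
-/

theorem HasDerivAt.comp_sqrt_sq {g : ℝ → ℝ} {g' t : ℝ} (hg : HasDerivAt g g' t) (ht : 0 < t) :
    HasDerivAt (fun s => g (√s)) (g' / (2 * t)) (t ^ 2) := by
  have hsqrt := Real.hasDerivAt_sqrt (pow_pos ht 2).ne'
  rw [Real.sqrt_sq ht.le] at hsqrt
  rw [← Real.sqrt_sq ht.le] at hg
  refine (hg.comp (t ^ 2) hsqrt).congr_deriv ?_
  ring

theorem hasDerivAt_sq_comp_sqrt {f : ℝ → ℝ} {f' s : ℝ} (hf : HasDerivAt f f' (√s))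
    (hs : 0 < s) : HasDerivAt (fun s => f (√s) ^ 2) (f (√s) * f' / √s) s := by
  have hsqrt_pos : 0 < √s := Real.sqrt_pos.mpr hs
  have h := (hf.comp_sqrt_sq hsqrt_pos).fun_pow 2
  rw [Real.sq_sqrt hs.le] at h
  refine h.congr_deriv ?_
  field_simp
  ring

theorem deriv_sq_comp_sqrt_eventuallyEq {f : ℝ → ℝ} {t : ℝ} (ht : 0 < t)
    (hf : ∀ᶠ x in 𝓝 t, DifferentiableAt ℝ f x) :
    deriv (fun s => f (√s) ^ 2) =ᶠ[𝓝 (t ^ 2)] fun s => f (√s) * deriv f (√s) / √s := by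
  have hsqrt : Tendsto Real.sqrt (𝓝 (t ^ 2)) (𝓝 t) := by
    have h := Real.continuous_sqrt.tendsto (t ^ 2)
    rwa [Real.sqrt_sq ht.le] at h
  filter_upwards [hsqrt.eventually hf, lt_mem_nhds (pow_pos ht 2)] with s hfs hs
  exact (hasDerivAt_sq_comp_sqrt hfs.hasDerivAt hs).deriv

theorem deriv_deriv_sq_comp_sqrt_sq {f : ℝ → ℝ} {t : ℝ} (ht : 0 < t)
    (hf : ∀ᶠ x in 𝓝 t, DifferentiableAt ℝ f x) (hf' : DifferentiableAt ℝ (deriv f) t) :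
    deriv (deriv (fun s => f (√s) ^ 2)) (t ^ 2) =
      (deriv f t ^ 2 + f t * deriv (deriv f) t) / (2 * t ^ 2) -
        f t * deriv f t / (2 * t ^ 3) := by
  have hquot : HasDerivAt (fun s => f (√s) * deriv f (√s) / √s) _ (t ^ 2) :=
    ((hf.self_of_nhds.hasDerivAt.comp_sqrt_sq ht).mul (hf'.hasDerivAt.comp_sqrt_sq ht)).div
      ((hasDerivAt_id t).comp_sqrt_sq ht) (by simpa [Real.sqrt_sq ht.le] using ht.ne')
  rw [(deriv_sq_comp_sqrt_eventuallyEq ht hf).deriv_eq, hquot.deriv, Pi.mul_apply,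
    Real.sqrt_sq ht.le]
  field_simp

theorem mul_sq_mul_lt_iff {t a b c : ℝ} (ht : t ≠ 0) (ha : a ≠ 0) :
    2 * t ^ 2 * a ^ 2 * ((b ^ 2 + a * c) / (2 * t ^ 2) - a * b / (2 * t ^ 3)) <
        (1 - a * b / t) * (t ^ 2 * (a * b / t) ^ 2 + a ^ 2) ↔
      a * (c + b ^ 3 / t) < 1 := by
  have gap : (1 - a * b / t) * (t ^ 2 * (a * b / t) ^ 2 + a ^ 2) -
      2 * t ^ 2 * a ^ 2 * ((b ^ 2 + a * c) / (2 * t ^ 2) - a * b / (2 * t ^ 3)) =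
        a ^ 2 * (1 - a * (c + b ^ 3 / t)) := by
    field_simp
    ring
  rw [← sub_pos, gap, mul_pos_iff_of_pos_left (sq_pos_of_ne_zero ha), sub_pos]

theorem stmt_8_general (t : ℝ) (ht : 0 < t) (f : ℝ → ℝ) (V : Set ℝ) (hV : IsOpen V)
    (htV : t ∈ V)
    (hf : ContDiffOn ℝ 2 f V) (hfpos : ∀ s ∈ V, 0 < f s) :
    (deriv (fun s => f (Real.sqrt s) ^ 2) (t ^ 2) < 1 ↔ f t * deriv f t / t < 1) ∧
    (2 * t ^ 2 * (f t) ^ 2 * deriv (deriv (fun s => f (Real.sqrt s) ^ 2)) (t ^ 2) <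
        (1 - deriv (fun s => f (Real.sqrt s) ^ 2) (t ^ 2)) *
          (t ^ 2 * (deriv (fun s => f (Real.sqrt s) ^ 2) (t ^ 2)) ^ 2 + (f t) ^ 2)
      ↔ f t * (deriv (deriv f) t + (deriv f t) ^ 3 / t) < 1) := by
  have hf_diff : ∀ᶠ x in 𝓝 t, DifferentiableAt ℝ f x := by
    filter_upwards [hV.mem_nhds htV] with x hx
    exact (hf.differentiableOn (by norm_num)).differentiableAt (hV.mem_nhds hx)
  have hf'_diff : DifferentiableAt ℝ (deriv f) t :=
    ((hf.deriv_of_isOpen hV (by norm_num)).differentiableOn one_ne_zero).differentiableAt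
      (hV.mem_nhds htV)
  have hθ' : deriv (fun s => f (√s) ^ 2) (t ^ 2) = f t * deriv f t / t := by
    rw [(deriv_sq_comp_sqrt_eventuallyEq ht hf_diff).eq_of_nhds, Real.sqrt_sq ht.le]
  rw [hθ', deriv_deriv_sq_comp_sqrt_sq ht hf_diff hf'_diff]
  exact ⟨Iff.rfl, mul_sq_mul_lt_iff ht.ne' (hfpos t htV).ne'⟩

theorem stmt_8 (t : ℝ) (ht : 0 < t) (f : ℝ → ℝ) (V : Set ℝ) (hV : IsOpen V)
    (hVsub : V ⊆ Ioi (0 : ℝ)) (htV : t ∈ V)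
    (hf : ContDiffOn ℝ 2 f V) (hfpos : ∀ s ∈ V, 0 < f s) :
    (deriv (fun s => f (Real.sqrt s) ^ 2) (t ^ 2) < 1 ↔ f t * deriv f t / t < 1) ∧
    (2 * t ^ 2 * (f t) ^ 2 * deriv (deriv (fun s => f (Real.sqrt s) ^ 2)) (t ^ 2) <
        (1 - deriv (fun s => f (Real.sqrt s) ^ 2) (t ^ 2)) *
          (t ^ 2 * (deriv (fun s => f (Real.sqrt s) ^ 2) (t ^ 2)) ^ 2 + (f t) ^ 2)
      ↔ f t * (deriv (deriv f) t + (deriv f t) ^ 3 / t) < 1) :=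
  stmt_8_general t ht f V hV htV hf hfpos
end
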